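/- arXiv:1304.0352 — 5 statements merged into one kernel-verified Lean document; each statement's English description precedes it below -/
import Mathlib

section
/- The number of surjections u from {1,...,2n-2} onto {1,...,n} that are non-degenerate (u(i) ≠ u(i+1) for all i), contain no subsequence of the form (i,j,i,j) with i ≠ j, and contain no subsequence of the form (i,j,i) with j = i+1 or j < i, equals 2·(2n-5)!! for all n ≥ 3 (where (2n-5)!! = (2n-5)(2n-7)···3·1). -/
/-!
In a word of `C'_n` the letter `n` occurs only once: it is followed by a smaller letter `b`, and
a second `n` would complete the forbidden pattern `n b n`. Deleting it, together with one of its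
two neighbours when these are equal, leaves an admissible word on `n - 1` letters. Such words
have length at most `2n - 2` (for `n = 2` the patterns `1 2 1` and `2 1 2` are forbidden), so for
`n ≥ 3` the neighbours must be equal: every word of `C'_n` arises in exactly one way from a word
`u` of `C'_{n-1}` by replacing a letter `a ≠ n - 1` of `u` by `a n a`. All `2n - 4` letters of
`u` but the single `n - 1` may be chosen, whence `|C'_n| = (2n - 5) |C'_{n-1}|`; and
`|C'_2| = 2`.
-/

open Finsupp

/-- The free ℤ-module on sequences (the underlying module of the surjection operad). -/
abbrev FM : Type := List ℕ →₀ ℤ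

/-- A sequence is non-degenerate if consecutive entries differ. -/
def Nondeg (u : List ℕ) : Prop := u.Chain' (· ≠ ·)

/-- `u` has all its values in `{1,…,n}` and attains each of them. -/
def IsSurjSeq (n : ℕ) (u : List ℕ) : Prop :=
  (∀ x ∈ u, x ∈ Finset.Icc 1 n) ∧ ∀ v ∈ Finset.Icc 1 n, v ∈ u

/-- No subsequence of the form (i,j,i,j) with i ≠ j. -/
def NoIJIJ (u : List ℕ) : Prop := ∀ i j : ℕ, i ≠ j → ¬ List.Sublist [i, j, i, j] u

/-- No subsequence of the form (i,j,i) with j = i+1 or j < i. -/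
def NoBadIJI (u : List ℕ) : Prop := ∀ i j : ℕ, (j = i + 1 ∨ j < i) → ¬ List.Sublist [i, j, i] u

/-- A cactus with n lobes in degree k: a non-degenerate surjection
`{1,…,n+k} → {1,…,n}` with no (i,j,i,j) subsequence. -/
def IsCactus (n k : ℕ) (u : List ℕ) : Prop :=
  u.length = n + k ∧ Nondeg u ∧ IsSurjSeq n u ∧ NoIJIJ u

/-- The set C′ₙ: top-degree cacti with no (i,j,i) subsequence with j=i+1 or j<i. -/
def MemC' (n : ℕ) (u : List ℕ) : Prop := IsCactus n (n - 2) u ∧ NoBadIJI u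

/-- Does the value at (0-based) index i reappear strictly later in u? -/
def Reoccurs (u : List ℕ) (i : ℕ) : Bool := (u.drop (i+1)).contains (u.getD i 0)

/-- Relative degree of the prefix of u of length j (number of 0-based indices < j
whose value reappears later in u). -/
def prefDeg (u : List ℕ) (j : ℕ) : ℕ := ((List.range j).filter (fun i => Reoccurs u i)).length

/-- Relative degree of the segment of 0-based indices [a, b-1] of u. -/
def segDeg (u : List ℕ) (a b : ℕ) : ℕ :=
  ((List.range' a (b - a)).filter (fun i => Reoccurs u i)).length

/-- Replace the (0-based) j-th entry u(j) of u by the triple (u(j), w, u(j)). -/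
def ringIns (u : List ℕ) (w j : ℕ) : List ℕ :=
  u.take j ++ [u.getD j 0, w, u.getD j 0] ++ u.drop (j+1)

/-- The largest value occurring in u (the arity n for a surjection onto {1,…,n}). -/
def topVal (u : List ℕ) : ℕ := u.foldr max 0

/-- The degree of a surjection sequence: length minus number of distinct values. -/
def degOf (u : List ℕ) : ℕ := u.length - u.dedup.length

/-- The Berger–Fresse sign exponent for omitting the (0-based) i-th entry. -/
def deltaSignExp (u : List ℕ) (i : ℕ) : ℕ :=
  if Reoccurs u i then prefDeg u i
  else prefDeg u (((List.range i).filter (fun a => u.getD a 0 == u.getD i 0)).getLastD 0 + 1)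

/-- The Berger–Fresse differential on a basis sequence. -/
noncomputable def deltaList (u : List ℕ) : FM :=
  ∑ i ∈ Finset.range u.length,
    if u.count (u.getD i 0) = 1 then 0
    else ((-1 : ℤ) ^ deltaSignExp u i) • Finsupp.single (u.eraseIdx i) 1

/-- The Berger–Fresse differential, extended linearly. -/
noncomputable def deltaFM (x : FM) : FM := x.sum fun u c => c • deltaList u

/-- The white operation u^□ = Σ_{j<i₀} (−1)^{k+|u|_j} ů_j, where i₀ is the position of
the unique occurrence of the top value n and ů_j inserts a lobe n+1 over the j-th entry. -/
noncomputable def sqList (u : List ℕ) : FM :=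
  ∑ j ∈ Finset.range (u.idxOf (topVal u)),
    ((-1 : ℤ) ^ (degOf u + prefDeg u j)) • Finsupp.single (ringIns u (topVal u + 1) j) 1

/-- The black operation u^▪ = −Σ_{j>i₀} (−1)^{k+|u|_j} ů_j. -/
noncomputable def blList (u : List ℕ) : FM :=
  - ∑ j ∈ Finset.Ico (u.idxOf (topVal u) + 1) u.length,
    ((-1 : ℤ) ^ (degOf u + prefDeg u j)) • Finsupp.single (ringIns u (topVal u + 1) j) 1

/-- Linear extension of (−)^□. -/
noncomputable def sqFM (x : FM) : FM := x.sum fun u c => c • sqList u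

/-- Linear extension of (−)^▪. -/
noncomputable def blFM (x : FM) : FM := x.sum fun u c => c • blList u

/-- The 0-based positions of the value t in v. -/
def tPositions (v : List ℕ) (t : ℕ) : List ℕ :=
  (List.range v.length).filter (fun i => v.getD i 0 == t)

/-- Relabelling α(s) = s + t − 1 for the inner factor. -/
def alphaMap (t : ℕ) (l : List ℕ) : List ℕ := l.map (fun s => s + t - 1)

/-- Relabelling β(s) = s for s < t and s + n − 1 for s > t of the outer factor. -/
def betaMap (t nn : ℕ) (l : List ℕ) : List ℕ :=
  l.map (fun s => if s < t then s else s + nn - 1)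

/-- The block of u from 1-based position a to b inclusive. -/
def blockSeg (u : List ℕ) (a b : ℕ) : List ℕ := (u.drop (a - 1)).take (b - a + 1)

/-- The q-th piece of v when it is cut at the occurrences of t (whose 0-based
positions are listed in tp): v = (v₀, t, v₁, t, …, t, v_r). -/
def vPiece (v : List ℕ) (tp : List ℕ) (q : ℕ) : List ℕ :=
  if q = 0 then v.take (tp.getD 0 0)
  else if q = tp.length then v.drop (tp.getD (tp.length - 1) 0 + 1)
  else (v.drop (tp.getD (q-1) 0 + 1)).take (tp.getD q 0 - tp.getD (q-1) 0 - 1)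

/-- The Koszul sign exponent Σ_{p ≤ q} deg(u_p)·deg(v_q) for the splitting with
1-based cut points jf = (j₀, …, j_r). -/
def bfSignExp (v : List ℕ) (u : List ℕ) (jf tp : List ℕ) : ℕ :=
  ∑ p ∈ Finset.Icc 1 tp.length, ∑ q ∈ Finset.Icc p tp.length,
    (segDeg u (jf.getD (p-1) 0 - 1) (jf.getD p 0 - 1)) *
    (if q = tp.length then segDeg v (tp.getD (tp.length - 1) 0) (v.length - 1)
     else segDeg v (tp.getD (q-1) 0) (tp.getD q 0))

/-- The interleaved sequence (βv₀, αu₁, βv₁, …, αu_r, βv_r). -/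
def bfResult (v : List ℕ) (t : ℕ) (u : List ℕ) (jf tp : List ℕ) : List ℕ :=
  betaMap t (topVal u) (vPiece v tp 0) ++
  (List.range tp.length).flatMap (fun p =>
    alphaMap t (blockSeg u (jf.getD p 0) (jf.getD (p+1) 0)) ++
    betaMap t (topVal u) (vPiece v tp (p+1)))

/-- The Berger–Fresse operadic composition v ∘_t u, as a sum over all splittings
1 = j₀ ≤ j₁ ≤ … ≤ j_r = length u with Koszul signs. -/
noncomputable def bfComp (v : List ℕ) (t : ℕ) (u : List ℕ) : FM :=
  ∑ s ∈ Finset.sym (Finset.Icc 1 u.length) ((tPositions v t).length - 1),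
    ((-1 : ℤ) ^ bfSignExp v u (1 :: (Multiset.sort s.1 (· ≤ ·) ++ [u.length])) (tPositions v t)) •
      Finsupp.single
        (bfResult v t u (1 :: (Multiset.sort s.1 (· ≤ ·) ++ [u.length])) (tPositions v t)) 1

/-- Bilinear extension of the Berger–Fresse composition. -/
noncomputable def bfCompFM (x : FM) (t : ℕ) (y : FM) : FM :=
  x.sum fun v c => y.sum fun u d => (c * d) • bfComp v t u

/-- μ on reversed words: the head of the list is the last letter ξ_{n-1}, which is
the outermost operation; `true` stands for □ and `false` for ▪. -/
noncomputable def muW : List Bool → FM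
  | [] => 0
  | [b] => Finsupp.single (if b then [2,1] else [1,2]) 1
  | b :: ξ => if b then sqFM (muW ξ) else blFM (muW ξ)

/-- μ(m_ξ) for a word ξ = (ξ₁,…,ξ_{n-1}) ∈ {□,▪}^{n-1} written in the paper's order. -/
noncomputable def muP (ξ : List Bool) : FM := muW ξ.reverse

/-- Degree-0 (permutation) substitution composition. -/
def permSubst (σ : List ℕ) (t : ℕ) (τ : List ℕ) : List ℕ :=
  σ.flatMap fun s => if s = t then τ.map (· + (t - 1)) else [if s < t then s else s + τ.length - 1]

namespace List

variable {α : Type*}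

theorem Sublist.of_sublist_append_cons_of_notMem {p x y : List α} {c : α}
    (h : p <+ x ++ c :: y) (hc : c ∉ p) : p <+ x ++ y := by
  obtain ⟨p₁, p₂, rfl, h₁, h₂⟩ := sublist_append_iff.1 h
  rcases sublist_cons_iff.1 h₂ with h₂ | ⟨r, rfl, -⟩
  · exact h₁.append h₂
  · simp at hc

theorem IsChain.sublist_of_sublist_append_cons_cons {p x y : List α} {a : α}
    (hp : p.IsChain (· ≠ ·)) (h : p <+ x ++ a :: a :: y) : p <+ x ++ a :: y := by
  obtain ⟨p₁, p₂, rfl, h₁, h₂⟩ := sublist_append_iff.1 h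
  rcases sublist_cons_iff.1 h₂ with h₂ | ⟨r, rfl, hr⟩
  · exact h₁.append h₂
  rcases sublist_cons_iff.1 hr with hr | ⟨r', rfl, -⟩
  · exact h₁.append (hr.cons_cons a)
  · exact absurd rfl (isChain_cons_cons.1 (hp.right_of_append)).1

theorem exists_eq_append_cons_of_lt {u : List α} {j : ℕ} (hj : j < u.length) :
    ∃ x a y, u = x ++ a :: y ∧ x.length = j :=
  ⟨u.take j, u[j], u.drop (j + 1), by simp, by simp [hj.le]⟩

theorem getD_append_cons_length (x y : List α) (a d : α) :
    (x ++ a :: y).getD x.length d = a := by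
  simp

theorem getD_append_cons_eq_iff {x y : List α} {a d : α} (hx : a ∉ x)
    (hy : a ∉ y) {j : ℕ} (hj : j < (x ++ a :: y).length) :
    (x ++ a :: y).getD j d = a ↔ j = x.length := by
  obtain ⟨x', b, y', h, rfl⟩ := exists_eq_append_cons_of_lt hj
  rw [h, getD_append_cons_length]
  constructor
  · rintro rfl
    exact congrArg length ((append_cons_inj_of_notMem hx hy).1 h).1.symm
  · intro hlen
    exact (cons_eq_cons.1 (append_inj h hlen.symm).2).1.symm

theorem IsChain.sublist_of_sublist_append_cons_cons_cons {p x y : List α} {a c : α}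
    (hp : p.IsChain (· ≠ ·)) (hc : c ∉ p) (h : p <+ x ++ a :: c :: a :: y) :
    p <+ x ++ a :: y := by
  have h' : p <+ (x ++ [a]) ++ c :: a :: y := by simpa using h
  simpa using hp.sublist_of_sublist_append_cons_cons
    (by simpa using h'.of_sublist_append_cons_of_notMem hc)

variable [DecidableEq α]

theorem exists_eq_append_cons_of_count_eq_one {l : List α} {a : α} (h : l.count a = 1) :
    ∃ x y, l = x ++ a :: y ∧ a ∉ x ∧ a ∉ y := by
  obtain ⟨x, y, rfl⟩ := append_of_mem (count_pos_iff.1 (by omega : 0 < l.count a))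
  simp only [count_append, count_cons_self] at h
  exact ⟨x, y, rfl, count_eq_zero.1 (by omega), count_eq_zero.1 (by omega)⟩

theorem Sublist.two_le_count {a b : α} {l : List α} (h : [a, b, a] <+ l) : 2 ≤ l.count a :=
  le_trans (by by_cases hb : b = a <;> simp [hb]) (h.count_le a)

theorem IsChain.exists_sublist_of_two_le_count {a : α} :
    ∀ {w : List α}, w.IsChain (· ≠ ·) → 2 ≤ w.count a →
      ∃ b, b ≠ a ∧ [a, b, a] <+ w
  | [], _, h => by simp at h
  | c :: w, hw, h => by
    by_cases hc : c = a
    · subst hc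
      rcases w with _ | ⟨b, w⟩
      · simp at h
      have hcb : c ≠ b := (isChain_cons_cons.1 hw).1
      have hcw : c ∈ w := by simpa [hcb.symm] using h
      exact ⟨b, hcb.symm, ((singleton_sublist.2 hcw).cons_cons b).cons_cons c⟩
    · obtain ⟨d, hd, hs⟩ := exists_sublist_of_two_le_count hw.tail
        (by simpa [count_cons, hc] using h)
      exact ⟨d, hd, hs.cons c⟩

end List

theorem ringIns_append_cons (x y : List ℕ) (a w : ℕ) :
    ringIns (x ++ a :: y) w x.length = x ++ a :: w :: a :: y := by
  simp [ringIns]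

theorem ringIns_inj {u u' : List ℕ} {w j j' : ℕ} (hu : w ∉ u)
    (hj : j < u.length) (hj' : j' < u'.length) (h : ringIns u w j = ringIns u' w j') :
    u = u' ∧ j = j' := by
  obtain ⟨x, a, y, rfl, rfl⟩ := List.exists_eq_append_cons_of_lt hj
  obtain ⟨x', a', y', rfl, rfl⟩ := List.exists_eq_append_cons_of_lt hj'
  rw [ringIns_append_cons, ringIns_append_cons] at h
  have h' : (x ++ [a]) ++ w :: a :: y = (x' ++ [a']) ++ w :: a' :: y' := by simpa using h
  rw [List.append_cons_inj_of_notMem (by simp_all) (by simp_all)] at h'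
  simp_all

/-- `skipAt q` enumerates the natural numbers other than `q` in increasing order, like
`Fin.succAbove`. -/
def skipAt (q k : ℕ) : ℕ := if k < q then k else k + 1

theorem skipAt_injective (q : ℕ) : Function.Injective (skipAt q) := by
  intro k k' h
  simp only [skipAt] at h
  split_ifs at h <;> omega

theorem exists_skipAt_eq_iff {q L j : ℕ} (hq : q ≤ L) :
    (∃ k < L, skipAt q k = j) ↔ j < L + 1 ∧ j ≠ q := by
  simp only [skipAt]
  constructor
  · rintro ⟨k, hk, rfl⟩
    split_ifs <;> omega
  · rintro ⟨hj, hjq⟩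
    refine ⟨if j < q then j else j - 1, by split_ifs <;> omega, ?_⟩
    split_ifs <;> omega

namespace CPrime

open List

theorem nondeg_iff {u : List ℕ} : Nondeg u ↔ u.IsChain (· ≠ ·) := Iff.rfl

def Admissible (m : ℕ) (w : List ℕ) : Prop :=
  Nondeg w ∧ IsSurjSeq m w ∧ NoIJIJ w ∧ NoBadIJI w

theorem memC'_iff_admissible {n : ℕ} (hn : 2 ≤ n) {w : List ℕ} :
    MemC' n w ↔ Admissible n w ∧ w.length = 2 * n - 2 := by
  unfold MemC' IsCactus Admissible
  constructor
  · rintro ⟨⟨hlen, hnd, hsurj, hijij⟩, hbad⟩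
    exact ⟨⟨hnd, hsurj, hijij, hbad⟩, by omega⟩
  · rintro ⟨⟨hnd, hsurj, hijij, hbad⟩, hlen⟩
    exact ⟨⟨by omega, hnd, hsurj, hijij⟩, hbad⟩

theorem isSurjSeq_insert_lobe {m a : ℕ} {x y : List ℕ} (h : IsSurjSeq m (x ++ a :: y)) :
    IsSurjSeq (m + 1) (x ++ a :: (m + 1) :: a :: y) := by
  refine ⟨fun v hv => ?_, fun v hv => ?_⟩
  · obtain rfl | hv : v = m + 1 ∨ v ∈ x ++ a :: y := by
      simp only [mem_append, mem_cons] at hv ⊢; tauto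
    · simp
    · have := h.1 v hv; simp only [Finset.mem_Icc] at this ⊢; omega
  · by_cases hvM : v = m + 1
    · simp [hvM]
    · have := h.2 v (by simp only [Finset.mem_Icc] at hv ⊢; omega)
      simp only [mem_append, mem_cons] at this ⊢; tauto

namespace Admissible

variable {m : ℕ} {w : List ℕ}

theorem mem_Icc (h : Admissible m w) {v : ℕ} (hv : v ∈ w) : 1 ≤ v ∧ v ≤ m :=
  Finset.mem_Icc.1 (h.2.1.1 v hv)

theorem count_top_eq_one (h : Admissible m w) (hm : 1 ≤ m) : w.count m = 1 := by
  have hpos : 0 < w.count m := count_pos_iff.2 (h.2.1.2 m (by simp [hm]))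
  by_contra hne
  obtain ⟨b, hbm, hs⟩ := (nondeg_iff.1 h.1).exists_sublist_of_two_le_count (a := m) (by omega)
  have hb := h.mem_Icc (hs.subset (by simp) : b ∈ w)
  exact h.2.2.2 m b (Or.inr (by omega)) hs

theorem of_sublist {u : List ℕ} (hw : Admissible (m + 1) w) (hu : u <+ w) (hnd : Nondeg u)
    (hM : m + 1 ∉ u) (hsurj : ∀ v ∈ w, v ≠ m + 1 → v ∈ u) : Admissible m u := by
  refine ⟨hnd, ⟨fun v hv => ?_, fun v hv => ?_⟩,
    fun i j hij hs => hw.2.2.1 i j hij (hs.trans hu),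
    fun i j hij hs => hw.2.2.2 i j hij (hs.trans hu)⟩
  · have := hw.mem_Icc (hu.subset hv)
    have : v ≠ m + 1 := by rintro rfl; exact hM hv
    simp only [Finset.mem_Icc]; omega
  · simp only [Finset.mem_Icc] at hv
    exact hsurj v (hw.2.1.2 v (by simp only [Finset.mem_Icc]; omega)) (by omega)

theorem exists_predecessor (h : Admissible (m + 1) w) :
    (∃ u, Admissible m u ∧ u.length + 1 = w.length) ∨
      ∃ x a y, Admissible m (x ++ a :: y) ∧ a ≠ m ∧ w = x ++ a :: (m + 1) :: a :: y := by
  obtain ⟨x, y, rfl, hx, hy⟩ :=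
    exists_eq_append_cons_of_count_eq_one (h.count_top_eq_one le_add_self)
  have hnd := nondeg_iff.1 h.1
  by_cases hxy : ∀ p ∈ x.getLast?, ∀ q ∈ y.head?, p ≠ q
  · refine Or.inl ⟨x ++ y, h.of_sublist ((sublist_cons_self _ y).append_left x) ?_ ?_ ?_,
      by simp only [length_append, length_cons]; omega⟩
    · exact nondeg_iff.2 (isChain_append.2 ⟨hnd.left_of_append, hnd.right_of_append.tail, hxy⟩)
    · simp [hx, hy]
    · intro v hv hvM; simpa [hvM] using hv
  · right
    push Not at hxy
    obtain ⟨a, ha, _, hb, rfl⟩ := hxy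
    obtain ⟨x, rfl⟩ := getLast?_eq_some_iff.1 ha
    obtain ⟨y, rfl⟩ := head?_eq_some_iff.1 hb
    refine ⟨x, a, y, h.of_sublist ?_ ?_ ?_ ?_, ?_, by simp⟩
    · simp
    · have := hnd.left_of_append.append_overlap (l₃ := y) hnd.right_of_append.tail (by simp)
      exact nondeg_iff.2 (by simpa using this)
    · simp_all
    · intro v hv hvM; simp_all
    · intro ham
      exact h.2.2.2 m (m + 1) (Or.inl rfl) (by subst ham; simp)

theorem length_le_two (h : Admissible 2 w) : w.length ≤ 2 := by
  match w, h with
  | [], _ | [_], _ | [_, _], _ => simp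
  | c :: d :: e :: w, h =>
    have hnd := nondeg_iff.1 h.1
    have hcd : c ≠ d := (isChain_cons_cons.1 hnd).1
    have hde : d ≠ e := (isChain_cons_cons.1 (isChain_cons_cons.1 hnd).2).1
    have hc := h.mem_Icc (by simp : c ∈ c :: d :: e :: w)
    have hd := h.mem_Icc (by simp : d ∈ c :: d :: e :: w)
    have he := h.mem_Icc (by simp : e ∈ c :: d :: e :: w)
    have hce : e = c := by omega
    exact (h.2.2.2 c d (by omega) (by subst hce; simp)).elim

theorem length_le (h : Admissible m w) (hm : 2 ≤ m) : w.length ≤ 2 * m - 2 := by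
  induction m, hm using Nat.le_induction generalizing w with
  | base => exact h.length_le_two
  | succ m hm ih =>
    rcases h.exists_predecessor with ⟨u, hu, hlen⟩ | ⟨x, a, y, hu, -, rfl⟩
    · have := ih hu; omega
    · have := ih hu; simp only [length_append, length_cons] at this ⊢; omega

theorem insert_lobe {x y : List ℕ} {a : ℕ} (hu : Admissible m (x ++ a :: y)) (ha : a ≠ m) :
    Admissible (m + 1) (x ++ a :: (m + 1) :: a :: y) := by
  have hnd := nondeg_iff.1 hu.1
  have ham : a < m := by have := hu.mem_Icc (by simp : a ∈ x ++ a :: y); omega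
  have hMx : m + 1 ∉ x := fun hM => by have := hu.mem_Icc (mem_append_left _ hM); omega
  have hMy : m + 1 ∉ y := fun hM => by
    have := hu.mem_Icc (mem_append_right _ (mem_cons_of_mem _ hM)); omega
  have hcount_M : (x ++ a :: (m + 1) :: a :: y).count (m + 1) = 1 := by
    simp [count_append, count_cons_of_ne (by omega : a ≠ m + 1), count_eq_zero_of_not_mem hMx,
      count_eq_zero_of_not_mem hMy]
  have hcount_m : (x ++ a :: (m + 1) :: a :: y).count m = 1 := by
    calc _ = (x ++ a :: y).count m := by simp [count_append, count_cons_of_ne ha]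
      _ = 1 := hu.count_top_eq_one (by omega)
  have hsurj := isSurjSeq_insert_lobe hu.2.1
  refine ⟨?_, hsurj, fun i j hij hs => ?_, fun i j hij hs => ?_⟩
  · rw [nondeg_iff, isChain_append_cons_cons, isChain_cons_cons]
    exact ⟨(isChain_split.1 hnd).1, by omega, by omega, (isChain_split.1 hnd).2⟩
  · by_cases hM : m + 1 ∈ [i, j, i, j]
    · have hi := (sublist_append_left [i, j, i] [j]).trans hs |>.two_le_count
      have hj := (sublist_cons_self i [j, i, j]).trans hs |>.two_le_count
      obtain rfl | rfl : i = m + 1 ∨ j = m + 1 := by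
        simp only [mem_cons, eq_comm, not_mem_nil, or_false] at hM; tauto
      all_goals omega
    · have hp : [i, j, i, j].IsChain (· ≠ ·) := by simp [hij, hij.symm]
      exact hu.2.2.1 i j hij (hp.sublist_of_sublist_append_cons_cons_cons hM hs)
  · by_cases hM : m + 1 ∈ [i, j, i]
    -- `i (m + 1) i` is forbidden only for `i = m`, and `m`, like `m + 1`, occurs once
    · have hi := hsurj.1 i (hs.subset (by simp))
      have := hs.two_le_count
      simp only [Finset.mem_Icc] at hi
      obtain rfl | rfl : i = m ∨ i = m + 1 := by
        simp only [mem_cons, not_mem_nil, or_false] at hM; omega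
      all_goals omega
    · have hp : [i, j, i].IsChain (· ≠ ·) := by
        simp only [isChain_cons_cons, isChain_singleton, and_true]; omega
      exact hu.2.2.2 i j hij (hp.sublist_of_sublist_append_cons_cons_cons hM hs)

end Admissible

theorem memC'_succ_iff {n : ℕ} (hn : 2 ≤ n) {w : List ℕ} :
    MemC' (n + 1) w ↔
      ∃ u j, MemC' n u ∧ j < u.length ∧ u.getD j 0 ≠ n ∧ w = ringIns u (n + 1) j := by
  simp only [memC'_iff_admissible hn, memC'_iff_admissible (by omega : 2 ≤ n + 1)]
  constructor
  · rintro ⟨hw, hlen⟩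
    rcases hw.exists_predecessor with ⟨u, hu, hlu⟩ | ⟨x, a, y, hu, ha, rfl⟩
    · have := hu.length_le hn; omega
    · refine ⟨x ++ a :: y, x.length, ⟨hu, ?_⟩, by simp, by simpa using ha,
        (ringIns_append_cons x y a (n + 1)).symm⟩
      simp only [length_append, length_cons] at hlen ⊢; omega
  · rintro ⟨u, j, ⟨hu, hlu⟩, hj, ha, rfl⟩
    obtain ⟨x, a, y, rfl, rfl⟩ := exists_eq_append_cons_of_lt hj
    rw [ringIns_append_cons]
    rw [getD_append_cons_length] at ha
    refine ⟨hu.insert_lobe ha, ?_⟩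
    simp only [length_append, length_cons] at hlu ⊢; omega

theorem exists_skipAt_idxOf_eq_iff {n : ℕ} (hn : 2 ≤ n) {u : List ℕ} (hu : MemC' n u)
    {j : ℕ} :
    (∃ k < 2 * n - 3, skipAt (u.idxOf n) k = j) ↔ j < u.length ∧ u.getD j 0 ≠ n := by
  obtain ⟨hu, hlen⟩ := (memC'_iff_admissible hn).1 hu
  obtain ⟨x, y, rfl, hx, hy⟩ :=
    exists_eq_append_cons_of_count_eq_one (hu.count_top_eq_one (by omega))
  simp only [length_append, length_cons] at hlen ⊢
  rw [idxOf_append_of_notMem hx, idxOf_cons_self, exists_skipAt_eq_iff (by omega)]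
  constructor
  · rintro ⟨hj, hne⟩
    exact ⟨by omega, fun h => hne ((getD_append_cons_eq_iff hx hy (by simp; omega)).1 h)⟩
  · rintro ⟨hj, hne⟩
    exact ⟨by omega, fun h => hne ((getD_append_cons_eq_iff hx hy (by simpa using hj)).2 h)⟩

theorem ncard_succ {n : ℕ} (hn : 2 ≤ n) :
    {w | MemC' (n + 1) w}.ncard = {u | MemC' n u}.ncard * (2 * n - 3) := by
  set f : List ℕ × ℕ → List ℕ := fun p => ringIns p.1 (n + 1) (skipAt (p.1.idxOf n) p.2)
  have hpos : ∀ u, MemC' n u → ∀ k < 2 * n - 3,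
      skipAt (u.idxOf n) k < u.length ∧ u.getD (skipAt (u.idxOf n) k) 0 ≠ n :=
    fun u hu k hk => (exists_skipAt_idxOf_eq_iff hn hu).1 ⟨k, hk, rfl⟩
  have hM : ∀ u, MemC' n u → n + 1 ∉ u := fun u hu hM => by
    have := ((memC'_iff_admissible hn).1 hu).1.mem_Icc hM; omega
  have himage : f '' ({u | MemC' n u} ×ˢ Set.Iio (2 * n - 3)) = {w | MemC' (n + 1) w} := by
    ext w
    rw [Set.mem_ofPred_eq, memC'_succ_iff hn]
    constructor
    · rintro ⟨⟨u, k⟩, ⟨hu, hk⟩, rfl⟩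
      exact ⟨u, _, hu, (hpos u hu k hk).1, (hpos u hu k hk).2, rfl⟩
    · rintro ⟨u, j, hu, hj, ha, rfl⟩
      obtain ⟨k, hk, rfl⟩ := (exists_skipAt_idxOf_eq_iff hn hu).2 ⟨hj, ha⟩
      exact ⟨(u, k), ⟨hu, hk⟩, rfl⟩
  have hinj : Set.InjOn f ({u | MemC' n u} ×ˢ Set.Iio (2 * n - 3)) := by
    rintro ⟨u, k⟩ ⟨hu, hk⟩ ⟨u', k'⟩ ⟨hu', hk'⟩ h
    obtain ⟨rfl, h⟩ := ringIns_inj (hM u hu) (hpos u hu k hk).1 (hpos u' hu' k' hk').1 h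
    rw [skipAt_injective _ h]
  rw [← himage, hinj.ncard_image, Set.ncard_prod]
  simp

theorem ncard_two : {w | MemC' 2 w}.ncard = 2 := by
  suffices {w | MemC' 2 w} = {[1, 2], [2, 1]} from this ▸ Set.ncard_pair (by decide)
  ext w
  rw [Set.mem_ofPred_eq, memC'_iff_admissible le_rfl]
  constructor
  · rintro ⟨h, hlen⟩
    obtain ⟨c, d, rfl⟩ : ∃ c d, w = [c, d] := by
      match w, hlen with | [c, d], _ => exact ⟨c, d, rfl⟩
    have hc := h.mem_Icc (by simp : c ∈ [c, d])
    have hd := h.mem_Icc (by simp : d ∈ [c, d])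
    have hcd : c ≠ d := by simpa using nondeg_iff.1 h.1
    simp only [Set.mem_insert_iff, cons.injEq, and_true, Set.mem_singleton_iff]; omega
  · have short : ∀ {p : List ℕ} {c d : ℕ}, 2 < p.length → ¬ p <+ [c, d] := fun hp hs => by
      have := hs.length_le; simp only [length_cons, length_nil] at this; omega
    rintro (rfl | rfl) <;>
      exact ⟨⟨by simp [nondeg_iff], ⟨by decide, by decide⟩,
        fun _ _ _ => short (by simp), fun _ _ _ => short (by simp)⟩, rfl⟩

end CPrime

/-- for n ≥ 3, the number of elements of C′ₙ is 2·(2n−5)!!. -/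
theorem card_C'_eq_two_mul_doubleFactorial (n : ℕ) (hn : 3 ≤ n) :
    {u : List ℕ | MemC' n u}.ncard = 2 * Nat.doubleFactorial (2 * n - 5) := by
  induction n, hn using Nat.le_induction with
  | base => rw [CPrime.ncard_succ le_rfl, CPrime.ncard_two]; rfl
  | succ n hn ih =>
    rw [CPrime.ncard_succ (by omega), ih, show 2 * (n + 1) - 5 = 2 * n - 5 + 2 by omega,
      Nat.doubleFactorial_add_two, show 2 * n - 5 + 2 = 2 * n - 3 by omega]
    ring
end

section
/- For n ≥ 3, every non-degenerate surjection u: {1,...,2n-2} → {1,...,n} with no (i,j,i,j)-subsequence (i≠j) and no (i,j,i)-subsequence with j=i+1 or j<i attains the value n exactly once, and u has one of the two forms (1,2,...,r,n,r,...,2) or (2,...,r,n,r,...,1) read at its first entries and last entries for some r ≤ n-2; in particular the first entry of u is 1 or 2. -/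
open Finsupp

/-!
The value `n` is the largest one, so a second occurrence of it would enclose a smaller value
`j`, giving a forbidden `(n, j, n)`; likewise `n - 1` occurs only once. Deleting the unique
`n` leaves a surjection onto `{1, …, n - 1}` of the same kind, except that its two neighbours
may now be equal; then they are some `a ≤ n - 2` and one copy of them is deleted too. Each
step removes at most two entries, so the length is at most `2n - 2`, and a sequence of exactly
that length must lose two entries at every step: its top value is flanked by the same value,
and its first and last entries are those of `[1, 2]` or `[2, 1]`, which is where the
reduction ends.
-/

open scoped List

namespace List

theorem IsChain.exists_ne_sublist_of_pair_sublist {α : Type*} {v : α} {u : List α}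
    (hc : u.IsChain (· ≠ ·)) (h : [v, v] <+ u) : ∃ j ≠ v, [v, j, v] <+ u := by
  induction u with
  | nil => simp at h
  | cons x u ih =>
    cases h with
    | cons _ h =>
      obtain ⟨j, hj, hs⟩ := ih hc.tail h
      exact ⟨j, hj, hs.cons x⟩
    | cons_cons _ h =>
      cases u with
      | nil => simp at h
      | cons y u =>
        have hvy : v ≠ y := (isChain_cons_cons.1 hc).1
        have hv : v ∈ u := by simpa [hvy] using singleton_sublist.1 h
        exact ⟨y, hvy.symm, ((singleton_sublist.2 hv).cons_cons y).cons_cons v⟩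

theorem IsChain.ne_erase_or_neighbors_eq {α : Type*} {l r : List α} {x : α}
    (h : (l ++ x :: r).IsChain (· ≠ ·)) :
    (l ++ r).IsChain (· ≠ ·) ∨
      ∃ l' a r', l = l' ++ [a] ∧ r = a :: r' ∧ (l' ++ a :: r').IsChain (· ≠ ·) := by
  rcases eq_nil_or_concat l with rfl | ⟨l', a, rfl⟩
  · exact .inl h.tail
  rw [concat_eq_append] at h ⊢
  rcases r with _ | ⟨b, r'⟩
  · exact .inl (by simpa using h.left_of_append)
  simp only [append_assoc, cons_append, nil_append, isChain_append_cons_cons] at h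
  obtain ⟨hl, -, hr⟩ := h
  by_cases hab : a = b
  · subst hab
    exact .inr ⟨l', a, r', rfl, rfl, by simpa using hl.append_overlap hr.tail (by simp)⟩
  · left
    simpa using hl.append hr.tail (by simpa using hab)

end List

structure BadFreeSurj (m : ℕ) (u : List ℕ) : Prop where
  nondeg : u.IsChain (· ≠ ·)
  surj : IsSurjSeq m u
  noBadIJI : NoBadIJI u

namespace BadFreeSurj

variable {m : ℕ} {u : List ℕ}

theorem one_le_and_le_of_mem (h : BadFreeSurj m u) {x : ℕ} (hx : x ∈ u) : 1 ≤ x ∧ x ≤ m :=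
  Finset.mem_Icc.1 (h.surj.1 x hx)

theorem mem_of_le (h : BadFreeSurj m u) {x : ℕ} (h1 : 1 ≤ x) (hm : x ≤ m) : x ∈ u :=
  h.surj.2 x (Finset.mem_Icc.2 ⟨h1, hm⟩)

theorem count_le_one (h : BadFreeSurj m u) {v : ℕ} (hv : m ≤ v + 1) : u.count v ≤ 1 := by
  by_contra! hcount
  have hpair : [v, v] <+ u := by
    simpa using List.replicate_sublist_iff.2 (show 2 ≤ u.count v by omega)
  obtain ⟨j, hjv, hs⟩ := h.nondeg.exists_ne_sublist_of_pair_sublist hpair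
  have hj := h.one_le_and_le_of_mem (x := j) (hs.subset (by simp))
  exact h.noBadIJI v j (by omega) hs

theorem of_sublist (h : BadFreeSurj (m + 1) u) {w : List ℕ} (hwu : w <+ u)
    (hw : w.IsChain (· ≠ ·)) (htop : m + 1 ∉ w) (hmem : ∀ x ∈ u, x ≠ m + 1 → x ∈ w) :
    BadFreeSurj m w where
  nondeg := hw
  surj := by
    refine ⟨fun x hx => ?_, fun x hx => hmem x (h.mem_of_le ?_ ?_) ?_⟩
    · have := h.one_le_and_le_of_mem (hwu.subset hx)
      have : x ≠ m + 1 := fun hxm => htop (hxm ▸ hx)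
      exact Finset.mem_Icc.2 (by omega)
    all_goals simp only [Finset.mem_Icc] at hx; omega
  noBadIJI i j hij hs := h.noBadIJI i j hij (hs.trans hwu)

theorem exists_erase_top (h : BadFreeSurj (m + 1) u) :
    (∃ w, BadFreeSurj m w ∧ u.length = w.length + 1) ∨
      ∃ l a r, u = l ++ a :: (m + 1) :: a :: r ∧ a < m ∧ BadFreeSurj m (l ++ a :: r) := by
  obtain ⟨l, r, rfl⟩ := List.append_of_mem (h.mem_of_le (by omega) le_rfl)
  have htop := h.count_le_one (v := m + 1) (by omega)
  simp only [List.count_append, List.count_cons_self] at htop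
  have hl : m + 1 ∉ l := List.count_eq_zero.1 (by omega)
  have hr : m + 1 ∉ r := List.count_eq_zero.1 (by omega)
  have hmem : ∀ x ∈ l ++ (m + 1) :: r, x ≠ m + 1 → x ∈ l ++ r := by
    simp only [List.mem_append, List.mem_cons]; tauto
  rcases h.nondeg.ne_erase_or_neighbors_eq with hw | ⟨l', a, r', rfl, rfl, hw⟩
  · refine .inl ⟨l ++ r, h.of_sublist ?_ hw (by simp [hl, hr]) hmem,
      by simp only [List.length_append, List.length_cons]; omega⟩
    exact (List.sublist_cons_self _ r).append_left l
  · have ha := h.one_le_and_le_of_mem (x := a) (by simp)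
    have hna : a ≠ m + 1 := fun hna => hl (by simp [hna])
    have hacount : 2 ≤ (l' ++ [a] ++ (m + 1) :: a :: r').count a := by
      simp only [List.count_append, List.count_cons_of_ne hna.symm, List.count_cons_self]
      omega
    have ham : a ≠ m := fun ham => by have := h.count_le_one (v := a) (by omega); omega
    refine .inr ⟨l', a, r', by simp, by omega, h.of_sublist ?_ hw (by simp_all) ?_⟩
    · simp only [List.append_assoc, List.singleton_append]
      exact ((List.sublist_cons_self _ _).cons _).cons_cons a |>.append_left l'
    · intro x hx hxm
      simpa [or_left_comm (b := x = a)] using hmem x hx hxm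

theorem length_le (hm : 2 ≤ m) (h : BadFreeSurj m u) : u.length ≤ 2 * m - 2 := by
  induction m, hm using Nat.le_induction generalizing u with
  | base =>
    have hsub : u.toFinset ⊆ Finset.Icc 1 2 := fun x hx => h.surj.1 x (List.mem_toFinset.1 hx)
    have hnodup : u.Nodup := List.nodup_iff_count_le_one.2 fun v => by
      by_cases hv : 1 ≤ v
      · exact h.count_le_one (by omega)
      · simp [List.count_eq_zero.2 fun hvu => hv (h.one_le_and_le_of_mem hvu).1]
    simpa [List.toFinset_card_of_nodup hnodup] using Finset.card_le_card hsub
  | succ m hm ih =>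
    rcases h.exists_erase_top with ⟨w, hw, hlen⟩ | ⟨l, a, r, rfl, -, hw⟩
    · have := ih hw; omega
    · have := ih hw; simp only [List.length_append, List.length_cons] at this ⊢; omega

theorem endpoints_of_length_eq (hm : 2 ≤ m) (h : BadFreeSurj m u) (hlen : u.length = 2 * m - 2) :
    (u.getD 0 0 = 1 ∧ u.getLast? = some 2) ∨ (u.getD 0 0 = 2 ∧ u.getLast? = some 1) := by
  induction m, hm using Nat.le_induction generalizing u with
  | base =>
    match u, hlen with
    | [x, y], _ =>
      have hxy : x ≠ y := (List.isChain_cons_cons.1 h.nondeg).1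
      have h1 : 1 = x ∨ 1 = y := by simpa using h.mem_of_le (x := 1) le_rfl (by omega)
      have h2 : 2 = x ∨ 2 = y := by simpa using h.mem_of_le (x := 2) (by omega) le_rfl
      simp only [List.getD_cons_zero, List.getLast?_cons_cons, List.getLast?_singleton,
        Option.some.injEq]
      omega
  | succ m hm ih =>
    rcases h.exists_erase_top with ⟨w, hw, hwlen⟩ | ⟨l, a, r, rfl, -, hw⟩
    · have := hw.length_le hm; omega
    · have hends := ih hw (by simp only [List.length_append, List.length_cons] at hlen ⊢; omega)
      have hfirst : (l ++ a :: (m + 1) :: a :: r).getD 0 0 = (l ++ a :: r).getD 0 0 := by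
        cases l <;> simp
      have hlast : (l ++ a :: (m + 1) :: a :: r).getLast? = (l ++ a :: r).getLast? := by
        rw [List.getLast?_append, List.getLast?_append]
        cases r <;> simp
      rwa [hfirst, hlast]

end BadFreeSurj

/-- structure of elements of C′ₙ for n ≥ 3: the value n occurs exactly once,
flanked on both sides by the same value r ≤ n−2, and u has the form (1,…,r,n,r,…,2) or
(2,…,r,n,r,…,1); in particular the first entry of u is 1 or 2. -/
theorem structure_of_C' (n : ℕ) (hn : 3 ≤ n) (u : List ℕ) (hu : MemC' n u) :
    u.count n = 1 ∧
    ∃ r ≤ n - 2, ∃ i : ℕ, 0 < i ∧ i + 1 < u.length ∧ u.getD i 0 = n ∧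
      u.getD (i - 1) 0 = r ∧ u.getD (i + 1) 0 = r ∧
      ((u.getD 0 0 = 1 ∧ u.getLast? = some 2) ∨ (u.getD 0 0 = 2 ∧ u.getLast? = some 1)) := by
  obtain ⟨⟨hlen, hnd, hsurj, -⟩, hbad⟩ := hu
  have h : BadFreeSurj n u := ⟨hnd, hsurj, hbad⟩
  have hlen' : u.length = 2 * n - 2 := by omega
  have hends := h.endpoints_of_length_eq (by omega) hlen'
  have hcount : u.count n = 1 :=
    le_antisymm (h.count_le_one (by omega)) (List.count_pos_iff.2 (h.mem_of_le (by omega) le_rfl))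
  obtain ⟨m, rfl⟩ : ∃ m, n = m + 1 := ⟨n - 1, by omega⟩
  rcases h.exists_erase_top with ⟨w, hw, hwlen⟩ | ⟨l, a, r, rfl, ham, -⟩
  · have := hw.length_le (by omega); omega
  · refine ⟨hcount, a, by omega, l.length + 1, by omega, ?_, ?_, ?_, ?_, hends⟩
    · simp only [List.length_append, List.length_cons]; omega
    all_goals simp [List.getD_eq_getElem?_getD, add_assoc]
end

section
/- For any cactus u ∈ C(n)_k in which the value n occurs exactly once, say at position i, the identity u^□ − u^▪ = (−1)^k (1,2,1) ∘₁ u − u ∘ₙ (1,2,1) holds, where u^□ = Σ_{j<i} (−1)^{k+|u|_j} ů_j and u^▪ = −Σ_{j>i} (−1)^{k+|u|_j} ů_j. -/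
open Finsupp

/-!
Both compositions with `(1,2,1)` reduce to insertions of a new lobe `n+1`. In `(1,2,1) ∘₁ u`
the cut of `u` ranges over all positions `j`, giving `Σⱼ (−1)^{|u|_j} ů_j`; in `u ∘ₙ (1,2,1)`
the only occurrence of `n` is replaced by `(n, n+1, n)`, giving the single term `ů_i` with
sign `(−1)^{k−|u|_i}`. Twisted by `(−1)^k`, the first sum splits at `i` into `u^□`, the term
`ů_i` of the second composition, and `−u^▪`.
-/

lemma prefDeg_cons (a : ℕ) (t : List ℕ) (j : ℕ) :
    prefDeg (a :: t) (j + 1) = (if a ∈ t then 1 else 0) + prefDeg t j := by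
  have h0 : Reoccurs (a :: t) 0 = t.contains a := rfl
  have hsucc : ∀ i, Reoccurs (a :: t) (i + 1) = Reoccurs t i := fun _ => rfl
  unfold prefDeg
  rw [List.range_succ_eq_map, List.filter_cons]
  simp only [h0, List.filter_map, Function.comp_def, hsucc]
  by_cases h : a ∈ t <;> simp [h, Nat.add_comm]

lemma prefDeg_length (u : List ℕ) : prefDeg u u.length = degOf u := by
  induction u with
  | nil => rfl
  | cons a t ih =>
    have := t.dedup_sublist.length_le
    rw [List.length_cons, prefDeg_cons, ih]
    unfold degOf
    by_cases h : a ∈ t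
    · simp only [List.dedup_cons_of_mem h, h, if_true, List.length_cons]
      omega
    · simp only [List.dedup_cons_of_notMem h, h, if_false, List.length_cons]
      omega

lemma prefDeg_eq_segDeg (u : List ℕ) (j : ℕ) : prefDeg u j = segDeg u 0 j := by
  rw [prefDeg, segDeg, List.range_eq_range', Nat.sub_zero]

lemma segDeg_add (u : List ℕ) {a b c : ℕ} (hab : a ≤ b) (hbc : b ≤ c) :
    segDeg u a b + segDeg u b c = segDeg u a c := by
  unfold segDeg
  have := List.range'_append_1 (s := a) (m := b - a) (n := c - b)
  rw [Nat.add_sub_cancel' hab, show b - a + (c - b) = c - a by omega] at this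
  rw [← List.length_append, ← List.filter_append, this]

lemma segDeg_length_pred (u : List ℕ) {a : ℕ} (ha : a < u.length) :
    segDeg u a (u.length - 1) = segDeg u a u.length := by
  have hlast : segDeg u (u.length - 1) u.length = 0 := by
    rw [segDeg, Nat.sub_sub_self (by omega), List.range'_one]
    simp [Reoccurs, List.drop_eq_nil_of_le (show u.length ≤ u.length - 1 + 1 by omega)]
  rw [← segDeg_add u (Nat.le_sub_one_of_lt ha) (Nat.sub_le _ _), hlast, Nat.add_zero]

lemma prefDeg_add_segDeg_length (u : List ℕ) {j : ℕ} (hj : j ≤ u.length) :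
    prefDeg u j + segDeg u j u.length = degOf u := by
  rw [prefDeg_eq_segDeg, segDeg_add u (Nat.zero_le j) hj, ← prefDeg_eq_segDeg, prefDeg_length]

lemma neg_one_pow_degOf_add_prefDeg (u : List ℕ) {j : ℕ} (hj : j ≤ u.length) :
    (-1 : ℤ) ^ (degOf u + prefDeg u j) = (-1) ^ segDeg u j u.length := by
  rw [← prefDeg_add_segDeg_length u hj, add_right_comm, ← two_mul, pow_add, pow_mul]
  simp

lemma IsSurjSeq.length_dedup {n : ℕ} {u : List ℕ} (h : IsSurjSeq n u) : u.dedup.length = n := by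
  have : u.toFinset = Finset.Icc 1 n := by
    ext x
    exact ⟨fun hx => h.1 x (List.mem_toFinset.1 hx), fun hx => List.mem_toFinset.2 (h.2 x hx)⟩
  rw [← List.card_toFinset, this, Nat.card_Icc, Nat.add_sub_cancel]

lemma IsCactus.degOf_eq {n k : ℕ} {u : List ℕ} (h : IsCactus n k u) : degOf u = k := by
  rw [degOf, h.2.2.1.length_dedup, h.1, Nat.add_sub_cancel_left]

lemma le_topVal {x : ℕ} {l : List ℕ} (h : x ∈ l) : x ≤ topVal l := by
  induction l with
  | nil => simp at h
  | cons a t ih =>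
    rcases List.mem_cons.1 h with rfl | h'
    · exact le_max_left _ _
    · exact (ih h').trans (le_max_right _ _)

lemma topVal_le {n : ℕ} {l : List ℕ} (h : ∀ x ∈ l, x ≤ n) : topVal l ≤ n := by
  induction l with
  | nil => exact Nat.zero_le n
  | cons a t ih => exact max_le (h a List.mem_cons_self) (ih fun x hx => h x (.tail a hx))

lemma topVal_eq {n : ℕ} {l : List ℕ} (hn : n ∈ l) (h : ∀ x ∈ l, x ≤ n) : topVal l = n :=
  (topVal_le h).antisymm (le_topVal hn)

lemma tPositions_cons (a x : ℕ) (t : List ℕ) :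
    tPositions (a :: t) x = (if a = x then [0] else []) ++ (tPositions t x).map (· + 1) := by
  unfold tPositions
  rw [List.length_cons, List.range_succ_eq_map, List.filter_cons]
  simp only [List.filter_map, Function.comp_def]
  by_cases h : a = x <;> simp [h]

lemma tPositions_eq_nil {x : ℕ} {l : List ℕ} (h : x ∉ l) : tPositions l x = [] := by
  induction l with
  | nil => rfl
  | cons a t ih =>
    simp only [List.mem_cons, not_or] at h
    rw [tPositions_cons, if_neg (Ne.symm h.1), ih h.2]
    rfl

lemma tPositions_eq_singleton {x : ℕ} {l : List ℕ} (h : l.count x = 1) :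
    tPositions l x = [l.idxOf x] := by
  induction l with
  | nil => simp at h
  | cons a t ih =>
    rw [tPositions_cons]
    by_cases hax : a = x
    · subst hax
      have : a ∉ t := fun hm => by
        have := List.count_pos_iff.2 hm
        rw [List.count_cons_self] at h
        omega
      rw [if_pos rfl, tPositions_eq_nil this, List.idxOf_cons_self]
      rfl
    · rw [List.count_cons_of_ne hax] at h
      rw [if_neg hax, ih h, List.idxOf_cons_ne _ hax]
      rfl

lemma notMem_take_idxOf_and_drop {x : ℕ} {l : List ℕ} (h : l.count x = 1) :
    x ∉ l.take (l.idxOf x) ∧ x ∉ l.drop (l.idxOf x + 1) := by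
  have hi : l.idxOf x < l.length := List.idxOf_lt_length_iff.2 (List.count_pos_iff.1 (by omega))
  have hc := congrArg (List.count x) (l.take_append_drop (l.idxOf x))
  rw [List.count_append, List.drop_eq_getElem_cons hi, List.getElem_idxOf hi,
    List.count_cons_self, h] at hc
  exact ⟨List.count_eq_zero.1 (by omega), List.count_eq_zero.1 (by omega)⟩

lemma betaMap_eq_self {t nn : ℕ} {l : List ℕ} (h : ∀ x ∈ l, x < t) : betaMap t nn l = l :=
  List.map_congr_left (g := id) (fun x hx => by simp [h x hx]) |>.trans (List.map_id l)

lemma alphaMap_one (l : List ℕ) : alphaMap 1 l = l :=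
  List.map_congr_left (g := id) (fun x _ => by simp) |>.trans (List.map_id l)

lemma ringIns_eq_take_append_drop {u : List ℕ} {w j : ℕ} (h : j < u.length) :
    ringIns u w j = u.take (j + 1) ++ w :: u.drop j := by
  rw [ringIns, List.getD_eq_getElem u 0 h]
  conv_rhs => rw [List.drop_eq_getElem_cons h, List.take_add_one, List.getElem?_eq_getElem h]
  simp only [List.append_assoc, List.cons_append, List.nil_append, Option.toList_some]

lemma Finset.sym_one_eq_map {α : Type*} [DecidableEq α] (s : Finset α) :
    s.sym 1 = s.map Sym.oneEquiv.toEmbedding := by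
  ext m
  obtain ⟨a, rfl⟩ := Sym.oneEquiv.surjective m
  simp only [Finset.mem_sym_iff, Finset.mem_map_equiv, Equiv.symm_apply_apply]
  exact ⟨fun h => h a (Multiset.mem_singleton_self a),
    fun h b hb => Multiset.mem_singleton.1 hb ▸ h⟩

lemma Finset.sum_range_eq_sum_range_add_add_sum_Ico {M : Type*} [AddCommMonoid M] (f : ℕ → M)
    {i m : ℕ} (h : i < m) :
    ∑ j ∈ Finset.range m, f j =
      ∑ j ∈ Finset.range i, f j + f i + ∑ j ∈ Finset.Ico (i + 1) m, f j := by
  rw [← Finset.sum_range_add_sum_Ico f h.le, Finset.sum_eq_sum_Ico_succ_bot h, add_assoc]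

lemma bfSignExp_121_left (u : List ℕ) (a : ℕ) :
    bfSignExp [1, 2, 1] u [1, a, u.length] [0, 2] = prefDeg u (a - 1) := by
  have h02 : segDeg [1, 2, 1] 0 2 = 1 := by decide
  have h22 : segDeg [1, 2, 1] 2 2 = 0 := by decide
  simp [bfSignExp, Finset.sum_Icc_succ_top, h02, h22, prefDeg_eq_segDeg]

lemma bfResult_121_left {u : List ℕ} {a : ℕ} (h1 : 1 ≤ a) (ha : a ≤ u.length) :
    bfResult [1, 2, 1] 1 u [1, a, u.length] [0, 2] = ringIns u (topVal u + 1) (a - 1) := by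
  have hfirst : blockSeg u 1 a = u.take a := by simp [blockSeg, Nat.sub_add_cancel h1]
  have hsecond : blockSeg u a u.length = u.drop (a - 1) :=
    List.take_of_length_le (by rw [List.length_drop]; omega)
  rw [ringIns_eq_take_append_drop (by omega), Nat.sub_add_cancel h1]
  simp [bfResult, vPiece, alphaMap_one, hfirst, hsecond, List.range_succ, betaMap, Nat.add_comm]

lemma bfComp_121_left (u : List ℕ) :
    bfComp [1, 2, 1] 1 u = ∑ j ∈ Finset.range u.length,
      ((-1 : ℤ) ^ prefDeg u j) • Finsupp.single (ringIns u (topVal u + 1) j) 1 := by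
  have hsort : ∀ a : ℕ, Multiset.sort (Sym.oneEquiv a).1 (· ≤ ·) = [a] :=
    fun a => Multiset.sort_singleton a (· ≤ ·)
  rw [bfComp, show tPositions [1, 2, 1] 1 = [0, 2] from rfl,
    show ([0, 2] : List ℕ).length - 1 = 1 from rfl, Finset.sym_one_eq_map,
    Finset.sum_map, ← Finset.Ico_add_one_right_eq_Icc, Finset.sum_Ico_eq_sum_range,
    Nat.add_sub_cancel]
  refine Finset.sum_congr rfl fun j hj => ?_
  have hj := Finset.mem_range.1 hj
  simp only [Equiv.coe_toEmbedding, hsort, List.cons_append, List.nil_append]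
  rw [bfSignExp_121_left, bfResult_121_left (by omega) (by omega), Nat.add_sub_cancel_left]

lemma bfSignExp_121_right (u : List ℕ) (i : ℕ) :
    bfSignExp u [1, 2, 1] [1, 3] [i] = segDeg u i (u.length - 1) := by
  have h02 : segDeg [1, 2, 1] 0 2 = 1 := by decide
  simp [bfSignExp, h02]

lemma bfResult_121_right {n : ℕ} {u : List ℕ} (hc : u.count n = 1) (hb : ∀ x ∈ u, x ≤ n) :
    bfResult u n [1, 2, 1] [1, 3] [u.idxOf n] = ringIns u (n + 1) (u.idxOf n) := by
  have hi : u.idxOf n < u.length := List.idxOf_lt_length_iff.2 (List.count_pos_iff.1 (by omega))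
  obtain ⟨hbefore, hafter⟩ := notMem_take_idxOf_and_drop hc
  have hlt : ∀ l : List ℕ, l.Sublist u → n ∉ l → ∀ x ∈ l, x < n := fun l hl hn x hx =>
    (hb x (hl.mem hx)).lt_of_ne fun h => hn (h ▸ hx)
  have hα : alphaMap n [1, 2, 1] = [n, n + 1, n] := by simp [alphaMap]; omega
  rw [ringIns, List.getD_eq_getElem u 0 hi, List.getElem_idxOf hi]
  simp [bfResult, vPiece, hα, blockSeg,
    betaMap_eq_self (hlt _ (List.take_sublist _ _) hbefore),
    betaMap_eq_self (hlt _ (List.drop_sublist _ _) hafter)]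

lemma bfComp_121_right {n : ℕ} {u : List ℕ} (hc : u.count n = 1) (hb : ∀ x ∈ u, x ≤ n) :
    bfComp u n [1, 2, 1] = ((-1 : ℤ) ^ segDeg u (u.idxOf n) u.length) •
      Finsupp.single (ringIns u (n + 1) (u.idxOf n)) 1 := by
  have hi : u.idxOf n < u.length := List.idxOf_lt_length_iff.2 (List.count_pos_iff.1 (by omega))
  rw [bfComp, tPositions_eq_singleton hc, show ([u.idxOf n] : List ℕ).length - 1 = 0 from rfl,
    Finset.sym_zero, Finset.sum_singleton]
  simp only [show (∅ : Sym ℕ 0).1 = (0 : Multiset ℕ) from rfl, Multiset.sort_zero,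
    show ([1, 2, 1] : List ℕ).length = 3 from rfl, List.nil_append]
  rw [bfSignExp_121_right, bfResult_121_right hc hb, segDeg_length_pred u hi]

noncomputable def lobeTerm (u : List ℕ) (j : ℕ) : FM :=
  ((-1 : ℤ) ^ (degOf u + prefDeg u j)) • Finsupp.single (ringIns u (topVal u + 1) j) 1

lemma sqList_sub_blList (u : List ℕ) :
    sqList u - blList u = ∑ j ∈ Finset.range (u.idxOf (topVal u)), lobeTerm u j +
      ∑ j ∈ Finset.Ico (u.idxOf (topVal u) + 1) u.length, lobeTerm u j :=
  sub_neg_eq_add _ _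

lemma neg_one_pow_degOf_smul_bfComp_121_left (u : List ℕ) :
    ((-1 : ℤ) ^ degOf u) • bfComp [1, 2, 1] 1 u = ∑ j ∈ Finset.range u.length, lobeTerm u j := by
  rw [bfComp_121_left, Finset.smul_sum]
  simp only [smul_smul, ← pow_add, lobeTerm]

lemma bfComp_121_right_eq_lobeTerm {n : ℕ} {u : List ℕ} (hc : u.count n = 1)
    (hb : ∀ x ∈ u, x ≤ n) : bfComp u n [1, 2, 1] = lobeTerm u (u.idxOf n) := by
  have hn : n ∈ u := List.count_pos_iff.1 (by omega)
  rw [bfComp_121_right hc hb, lobeTerm, topVal_eq hn hb,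
    neg_one_pow_degOf_add_prefDeg u List.idxOf_le_length]

/-- for any cactus u ∈ C(n)_k in which n occurs exactly once,
u^□ − u^▪ = (−1)^k (1,2,1) ∘₁ u − u ∘ₙ (1,2,1). -/
theorem sq_sub_bl_eq_brace_comm (n k : ℕ) (u : List ℕ)
    (hu : IsCactus n k u) (hn : u.count n = 1) :
    sqList u - blList u =
      ((-1 : ℤ) ^ k) • bfComp [1, 2, 1] 1 u - bfComp u n [1, 2, 1] := by
  have hmem : n ∈ u := List.count_pos_iff.1 (by omega)
  have hle : ∀ x ∈ u, x ≤ n := fun x hx => (Finset.mem_Icc.1 (hu.2.2.1.1 x hx)).2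
  rw [← hu.degOf_eq, neg_one_pow_degOf_smul_bfComp_121_left, bfComp_121_right_eq_lobeTerm hn hle,
    Finset.sum_range_eq_sum_range_add_add_sum_Ico _ (List.idxOf_lt_length_iff.2 hmem),
    sqList_sub_blList, topVal_eq hmem hle]
  abel
end

section
/- The maximal degree of a cactus with n lobes is n−1: every non-degenerate surjection u: {1,...,n+k} → {1,...,n} with no (i,j,i,j) subsequence (i≠j) satisfies k ≤ n−1. -/
open Finsupp

/-!
Induct on the length of a non-degenerate word `u` without a subword `i j i j`, proving
`|u| + 1 ≤ 2 · #values(u)`. If the first letter `a` never recurs, drop it. Otherwise write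
`u = a w a x` with `a ∉ w`; then `w` is non-empty by non-degeneracy, and `w` and `a x` share no
letter, since a common letter `b` would give the subword `a b a b`. The two inequalities for `w`
and `a x` add up to the one for `u`.
-/

theorem NoIJIJ.sublist {u v : List ℕ} (hu : NoIJIJ u) (hvu : v.Sublist u) : NoIJIJ v :=
  fun i j hij hsub => hu i j hij (hsub.trans hvu)

theorem NoIJIJ.disjoint_of_first_return {a : ℕ} {w x : List ℕ}
    (hu : NoIJIJ (a :: (w ++ a :: x))) (haw : a ∉ w) : w.Disjoint (a :: x) := by
  intro b hbw hbax
  rcases List.mem_cons.mp hbax with rfl | hbx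
  · exact haw hbw
  · have hab : a ≠ b := fun h => haw (h ▸ hbw)
    refine hu a b hab ?_
    simpa using
      (((List.Sublist.refl [a]).append (List.singleton_sublist.mpr hbw)).append
        (List.Sublist.refl [a])).append (List.singleton_sublist.mpr hbx)

theorem NoIJIJ.length_add_one_le_two_mul_card_toFinset {u : List ℕ} (hne : u ≠ [])
    (hnd : Nondeg u) (hu : NoIJIJ u) : u.length + 1 ≤ 2 * u.toFinset.card := by
  obtain ⟨a, v, rfl⟩ := List.exists_cons_of_ne_nil hne
  by_cases hav : a ∈ v
  · obtain ⟨w, x, rfl, haw⟩ := List.eq_append_cons_of_mem hav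
    have hw : w ≠ [] := by
      rintro rfl
      exact (List.isChain_cons_cons.mp hnd).1 rfl
    have ihw := NoIJIJ.length_add_one_le_two_mul_card_toFinset hw
      (hnd.infix ⟨[a], a :: x, by simp⟩) (hu.sublist (by simp))
    have ihx := NoIJIJ.length_add_one_le_two_mul_card_toFinset (List.cons_ne_nil a x)
      (hnd.suffix ⟨a :: w, by simp⟩) (hu.sublist (by simp))
    have hcard : (a :: (w ++ a :: x)).toFinset.card
        = w.toFinset.card + (a :: x).toFinset.card := by
      rw [← Finset.card_union_of_disjoint
        (List.disjoint_toFinset_iff_disjoint.mpr (hu.disjoint_of_first_return haw))]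
      congr 1
      ext c
      simp only [List.mem_toFinset, Finset.mem_union, List.mem_cons, List.mem_append]
      tauto
    simp only [List.length_cons, List.length_append] at ihw ihx ⊢
    omega
  · rcases eq_or_ne v [] with rfl | hv
    · simp
    have ih := NoIJIJ.length_add_one_le_two_mul_card_toFinset hv hnd.tail
      (hu.sublist (List.sublist_cons_self a v))
    rw [List.toFinset_cons, Finset.card_insert_of_notMem (by simpa using hav)]
    simp only [List.length_cons] at ih ⊢
    omega
termination_by u.length
decreasing_by all_goals subst_vars; simp only [List.length_cons, List.length_append]; omega

theorem IsSurjSeq.card_toFinset {n : ℕ} {u : List ℕ} (h : IsSurjSeq n u) :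
    u.toFinset.card = n := by
  have hvals : u.toFinset = Finset.Icc 1 n := by
    ext x
    rw [List.mem_toFinset]
    exact ⟨h.1 x, h.2 x⟩
  simp [hvals]

/-- the maximal degree of a cactus with n lobes is n−1: a non-degenerate
surjection onto {1,…,n} with no (i,j,i,j) subsequence has degree k ≤ n−1, i.e. its
domain has size at most 2n−1. -/
theorem cactus_degree_le (n k : ℕ) (u : List ℕ) (h1 : u.length = n + k)
    (h2 : Nondeg u) (h3 : IsSurjSeq n u) (h4 : NoIJIJ u) :
    k ≤ n - 1 ∧ u.length ≤ 2 * n - 1 := by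
  rcases eq_or_ne u [] with rfl | hne
  · simp only [List.length_nil] at h1 ⊢
    omega
  · have hbound := NoIJIJ.length_add_one_le_two_mul_card_toFinset hne h2 h4
    rw [h3.card_toFinset] at hbound
    omega
end

section
/- There is a morphism of differential graded operads φ: A_∞ → A^{(2)}_∞ determined on generators by φ(m_n) = Σ_{ξ ∈ {□,▪}^{n-1}} m_ξ; i.e., this assignment commutes with the differentials given by ∂(m_n) = Σ_{i=1}^{n} (−1)^{i-1} Σ_{p+q-1=n} (−1)^{q(p-i)} m_p ∘ᵢ m_q and ∂(m_ξ) = Σ_{i=1}^{n} (−1)^{i-1} Σ_{ξ′∘ᵢξ″=ξ} (−1)^{q(p-i)} m_{ξ′} ∘ᵢ m_{ξ″}. -/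
open Finsupp

/-- The quadratic part of the A∞ differential: ∂(m_n) = Σᵢ (−1)^{i−1} Σ_{p+q−1=n}
(−1)^{q(p−i)} m_p ∘ᵢ m_q, recorded as a formal sum of triples (p, i, q). -/
noncomputable def dAinf (n : ℕ) : (ℕ × ℕ × ℕ) →₀ ℤ :=
  ∑ p ∈ Finset.Icc 2 (n - 1), ∑ i ∈ Finset.Icc 1 p,
    ((-1 : ℤ) ^ (i - 1 + (n + 1 - p) * (p - i))) • Finsupp.single (p, i, n + 1 - p) 1

/-- The quadratic part of the A∞⁽²⁾ differential: ∂(m_ξ) = Σᵢ (−1)^{i−1}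
Σ_{ξ′∘ᵢξ″=ξ} (−1)^{q(p−i)} m_{ξ′} ∘ᵢ m_{ξ″}, recorded as a formal sum of triples
(ξ′, i, ξ″); the unique decomposition of ξ with parameters (p, i, q) is
ξ′ = ξ.take (i−1) ++ ξ.drop (i−1+q−1) and ξ″ = (ξ.drop (i−1)).take (q−1). -/
noncomputable def dAinf2 (xi : List Bool) : (List Bool × ℕ × List Bool) →₀ ℤ :=
  ∑ p ∈ Finset.Icc 2 xi.length, ∑ i ∈ Finset.Icc 1 p,
    ((-1 : ℤ) ^ (i - 1 + (xi.length + 2 - p) * (p - i))) •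
      Finsupp.single
        (xi.take (i - 1) ++ xi.drop (i - 1 + (xi.length + 1 - p)), i,
          (xi.drop (i - 1)).take (xi.length + 1 - p)) 1

/-- φ applied termwise to quadratic expressions: m_p ∘ᵢ m_q ↦ Σ_{ξ′,ξ″} m_{ξ′} ∘ᵢ m_{ξ″}. -/
noncomputable def phiQuad (x : (ℕ × ℕ × ℕ) →₀ ℤ) : (List Bool × ℕ × List Bool) →₀ ℤ :=
  x.sum fun piq c =>
    c • ∑ f : Fin (piq.1 - 1) → Bool, ∑ g : Fin (piq.2.2 - 1) → Bool,
      Finsupp.single (List.ofFn f, piq.2.1, List.ofFn g) 1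

/-!
Cutting out the block of length `q - 1` starting at position `i - 1` is a bijection
`{□,▪}^(p+q-2) ≃ {□,▪}^(p-1) × {□,▪}^(q-1)`, inverse to `(ξ′, ξ″) ↦ ξ′ ∘ᵢ ξ″`. Hence summing the
`(p, i)`-term of `∂(m_ξ)` over all `ξ ∈ {□,▪}^(n-1)` gives `Σ_{ξ′, ξ″} m_{ξ′} ∘ᵢ m_{ξ″}` with the
sign of the `(p, i)`-term of `∂(m_n)`, which is `φ(m_p) ∘ᵢ φ(m_q)`.
-/

section BlockInsertion

variable {α : Type*} {a b : ℕ}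

def insertBlockEquiv (s : ℕ) (hs : s ≤ a) :
    List.Vector α a × List.Vector α b ≃ List.Vector α (a + b) where
  toFun vw := ⟨vw.1.toList.take s ++ vw.2.toList ++ vw.1.toList.drop s, by simp; omega⟩
  invFun u := (⟨u.toList.take s ++ u.toList.drop (s + b), by simp; omega⟩,
    ⟨(u.toList.drop s).take b, by simp; omega⟩)
  left_inv := by
    rintro ⟨⟨l, rfl⟩, ⟨m, rfl⟩⟩
    ext1 <;> apply Subtype.ext <;> simp [List.drop_append, List.drop_take, hs]
  right_inv := by
    rintro ⟨l, hl⟩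
    apply Subtype.ext
    have hsl : s ≤ l.length := by omega
    simp [hsl, ← List.drop_drop]

variable [Fintype α] {M : Type*} [AddCommMonoid M]

theorem sum_ofFn_eq_sum_vector {n : ℕ} (F : List α → M) :
    ∑ h : Fin n → α, F (List.ofFn h) = ∑ v : List.Vector α n, F v.toList :=
  Fintype.sum_equiv (Equiv.vectorEquivFin α n).symm _ _ fun h => by
    simp [Equiv.vectorEquivFin, List.Vector.toList_ofFn]

theorem sum_ofFn_split_block (s : ℕ) (hs : s ≤ a) (G : List α → List α → M) :
    ∑ h : Fin (a + b) → α,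
        G ((List.ofFn h).take s ++ (List.ofFn h).drop (s + b)) (((List.ofFn h).drop s).take b) =
      ∑ f : Fin a → α, ∑ g : Fin b → α, G (List.ofFn f) (List.ofFn g) :=
  calc
    _ = ∑ u : List.Vector α (a + b), G ((insertBlockEquiv s hs).symm u).1.toList
          ((insertBlockEquiv s hs).symm u).2.toList :=
          sum_ofFn_eq_sum_vector fun l => G (l.take s ++ l.drop (s + b)) ((l.drop s).take b)
    _ = ∑ p : List.Vector α a × List.Vector α b, G p.1.toList p.2.toList :=
          (insertBlockEquiv s hs).symm.sum_comp fun p => G p.1.toList p.2.toList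
    _ = ∑ v : List.Vector α a, ∑ w : List.Vector α b, G v.toList w.toList :=
          Fintype.sum_prod_type _
    _ = ∑ v : List.Vector α a, ∑ g : Fin b → α, G v.toList (List.ofFn g) := by
          simp only [sum_ofFn_eq_sum_vector]
    _ = _ := (sum_ofFn_eq_sum_vector fun l => ∑ g : Fin b → α, G l (List.ofFn g)).symm

end BlockInsertion

/-- `φ(m_p) ∘ᵢ φ(m_q)` for `piq = (p, i, q)`. -/
noncomputable def phiComp (piq : ℕ × ℕ × ℕ) : (List Bool × ℕ × List Bool) →₀ ℤ :=
  ∑ f : Fin (piq.1 - 1) → Bool, ∑ g : Fin (piq.2.2 - 1) → Bool,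
    Finsupp.single (List.ofFn f, piq.2.1, List.ofFn g) 1

theorem phiQuad_eq_linearCombination (x : (ℕ × ℕ × ℕ) →₀ ℤ) :
    phiQuad x = Finsupp.linearCombination ℤ phiComp x :=
  (Finsupp.linearCombination_apply ℤ x).symm

theorem phiQuad_dAinf (n : ℕ) :
    phiQuad (dAinf n) = ∑ p ∈ Finset.Icc 2 (n - 1), ∑ i ∈ Finset.Icc 1 p,
      ((-1 : ℤ) ^ (i - 1 + (n + 1 - p) * (p - i))) • phiComp (p, i, n + 1 - p) := by
  simp only [phiQuad_eq_linearCombination, dAinf, map_sum, map_smul,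
    Finsupp.linearCombination_single, one_smul]

theorem phiComp_eq_sum_split {p i : ℕ} (q : ℕ) (hi : i ≤ p) :
    phiComp (p, i, q) = ∑ h : Fin (p - 1 + (q - 1)) → Bool,
      Finsupp.single ((List.ofFn h).take (i - 1) ++ (List.ofFn h).drop (i - 1 + (q - 1)), i,
        ((List.ofFn h).drop (i - 1)).take (q - 1)) 1 :=
  (sum_ofFn_split_block (i - 1) (by omega) fun ξ' ξ'' => Finsupp.single (ξ', i, ξ'') 1).symm

theorem phi_commutes_with_differentials_general (n : ℕ) :
    phiQuad (dAinf n) = ∑ h : Fin (n - 1) → Bool, dAinf2 (List.ofFn h) := by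
  simp only [phiQuad_dAinf, dAinf2, List.length_ofFn]
  rw [Finset.sum_comm]
  refine Finset.sum_congr rfl fun p hp => ?_
  rw [Finset.sum_comm]
  refine Finset.sum_congr rfl fun i hi => ?_
  rw [Finset.mem_Icc] at hp hi
  rw [← Finset.smul_sum, phiComp_eq_sum_split _ hi.2,
    show p - 1 + (n + 1 - p - 1) = n - 1 by omega, show n - 1 + 2 - p = n + 1 - p by omega,
    show n - 1 + 1 - p = n + 1 - p - 1 by omega]

/-- the assignment φ(m_n) = Σ_{ξ ∈ {□,▪}^{n−1}} m_ξ commutes with the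
differentials of A∞ and A∞⁽²⁾, hence defines a morphism of dg operads A∞ → A∞⁽²⁾. -/
theorem phi_commutes_with_differentials (n : ℕ) (hn : 2 ≤ n) :
    phiQuad (dAinf n) = ∑ h : Fin (n - 1) → Bool, dAinf2 (List.ofFn h) :=
  phi_commutes_with_differentials_general n
end
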